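/- (Rogers–Szegő polynomials.) Let q ∈ (0,1) and set α_n = (-1)^n q^{(n+1)/2} for all n ≥ 0 (so |α_n| < 1). Then for all nonnegative integers n ≥ m, μ_{n,m} = [n choose m]_q · q^{(n-m)²/2}, where [n choose m]_q = ((1-q^n)(1-q^{n-1})⋯(1-q^{n-m+1}))/((1-q^m)(1-q^{m-1})⋯(1-q)) is the q-binomial coefficient (equal to 1 when m = 0); and μ_{n,m} = 0 for n < m. -/

import Mathlib

open Polynomial LaurentPolynomial Finset

noncomputable section

/-- Extension of the Verblunsky coefficients to integer indices, with the
convention `α₋₁ = -1` (and junk value `-1` for all negative indices). -/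
def az (α : ℕ → ℂ) (k : ℤ) : ℂ := if 0 ≤ k then α k.toNat else -1

/-- The monic OPUC `Φ_n` defined by Szegő's recurrence
`Φ_{n+1}(z) = z·Φ_n(z) - conj(α_n)·Φ_n^*(z)`, where `Φ_n^*` is the reverse
polynomial `reflect n (map conj Φ_n)`. -/
def szego (α : ℕ → ℂ) : ℕ → Polynomial ℂ
  | 0 => 1
  | n + 1 =>
      Polynomial.X * szego α n -
        Polynomial.C ((starRingEnd ℂ) (α n)) *
          Polynomial.reflect n ((szego α n).map (starRingEnd ℂ))

/-- `f̄(1/z)` as a Laurent polynomial, for a polynomial `f`. -/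
def polyBarInv (f : Polynomial ℂ) : LaurentPolynomial ℂ :=
  f.sum fun k c => LaurentPolynomial.C ((starRingEnd ℂ) c) * LaurentPolynomial.T (-(k : ℤ))

/-- `f̄(1/z)` as a Laurent polynomial, for a Laurent polynomial `f`. -/
def laurentBarInv (f : LaurentPolynomial ℂ) : LaurentPolynomial ℂ :=
  Finsupp.sum f.coeff fun k c => LaurentPolynomial.C ((starRingEnd ℂ) c) * LaurentPolynomial.T (-k)

/-- The generalized moment `μ_{n,r,s} = ⟨Φ_s(z), z^n·Φ_r(z)⟩ / ⟨Φ_s(z), Φ_s(z)⟩`,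
where `⟨f,g⟩ = L(f(z)·ḡ(1/z))` and `⟨Φ_s, Φ_s⟩ = ∏_{j<s} (1 - |α_j|²)`. -/
def genMom (L : LaurentPolynomial ℂ →ₗ[ℂ] ℂ) (α : ℕ → ℂ) (n : ℤ) (r s : ℕ) : ℂ :=
  L (Polynomial.toLaurent (szego α s) *
      laurentBarInv (LaurentPolynomial.T n * Polynomial.toLaurent (szego α r))) /
    ∏ j ∈ Finset.range s, ((1 - Complex.normSq (α j) : ℝ) : ℂ)

/-- `IsLatticePath S p l q` : the list of steps `l`, starting at `p`, forms a lattice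
path from `p` to `q` lying weakly above the x-axis, each step `st` taken from a
position `x` satisfying the (possibly position-dependent) step condition `S x st`. -/
def IsLatticePath (S : ℤ × ℤ → ℤ × ℤ → Prop) : ℤ × ℤ → List (ℤ × ℤ) → ℤ × ℤ → Prop
  | p, [], q => p = q ∧ 0 ≤ p.2
  | p, st :: rest, q => 0 ≤ p.2 ∧ S p st ∧ IsLatticePath S (p + st) rest q

/-- The weight of a path: the product of the weights of its steps, where the weight
of a step may depend on its starting position. -/
def pathWeight (w : ℤ × ℤ → ℤ × ℤ → ℂ) : ℤ × ℤ → List (ℤ × ℤ) → ℂ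
  | _, [] => 1
  | p, st :: rest => w p st * pathWeight w (p + st) rest

/-- Łukasiewicz steps: `(1, k)` with `k ≤ 1`. -/
def lukaStep (_p st : ℤ × ℤ) : Prop := st.1 = 1 ∧ st.2 ≤ 1

/-- Łukasiewicz step weights: an up-step has weight `1`, and a step
`(a,b) → (a+1,b-k)` (`0 ≤ k ≤ b`) has weight
`-α_b·conj(α_{b-k-1})·∏_{j=b-k}^{b-1} (1-|α_j|²)`. -/
def wtLstep (α : ℕ → ℂ) (p st : ℤ × ℤ) : ℂ :=
  if st.2 = 1 then 1
  else
    -(az α p.2) * (starRingEnd ℂ) (az α (p.2 + st.2 - 1)) *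
      ∏ j ∈ Finset.Ico (p.2 + st.2) p.2, ((1 - Complex.normSq (az α j) : ℝ) : ℂ)

/-- Gentle Motzkin steps: `(1,1)` (only at even `a+b`), `(1,0)`, `(1,-1)` (only at odd `a+b`). -/
def gentleStep (p st : ℤ × ℤ) : Prop :=
  (st = (1, 1) ∧ Even (p.1 + p.2)) ∨ st = (1, 0) ∨ (st = (1, -1) ∧ Odd (p.1 + p.2))

/-- Gentle Motzkin step weights. -/
def wtMstep (α : ℕ → ℂ) (p st : ℤ × ℤ) : ℂ :=
  if st = (1, 1) then 1
  else if st = (1, -1) then ((1 - Complex.normSq (az α (p.2 - 1)) : ℝ) : ℂ)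
  else if Even (p.1 + p.2) then az α p.2
  else -(starRingEnd ℂ) (az α (p.2 - 1))

/-- Schröder steps: `(1,1)`, `(1,0)`, `(0,-1)`. -/
def schStep (_p st : ℤ × ℤ) : Prop := st = (1, 1) ∨ st = (1, 0) ∨ st = (0, -1)

/-- Schröder step weights. -/
def wtSstep (α : ℕ → ℂ) (p st : ℤ × ℤ) : ℂ :=
  if st = (1, 1) then 1
  else if st = (1, 0) then -((starRingEnd ℂ) (az α (p.2 - 1)) / (starRingEnd ℂ) (az α p.2))
  else
    ((starRingEnd ℂ) (az α (p.2 - 2)) / (starRingEnd ℂ) (az α (p.2 - 1))) *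
      ((1 - Complex.normSq (az α (p.2 - 1)) : ℝ) : ℂ)

/-!
Put `s = √q`, so that `α_n = (-1)ⁿ s^{n+1}` is real and `Φ_{n+1} = z Φ_n - α_n Φ_n^*`. For
`p = Σ c_k z^k` let `Λ_n(p) = Σ c_k s^{(k-n)²}`. Then `Λ_n(z p) = Λ_{n-1}(p)` and
`Λ_n(p^*) = Λ_{m-n}(p)` for `deg p ≤ m`, and the recurrence gives by induction
`Λ_n(Φ_m) = s^{(n-m)²} ∏_{i<m} (1 - s^{2(n-i)})`. At `n = 0` the product vanishes for `m ≥ 1`, so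
the functional with moments `z^j ↦ s^{j²}` satisfies the orthogonality relations defining `L`; as
the `Φ_m` are monic of degree `m`, these relations determine `L`, and then
`μ_{n,m} = Λ_n(Φ_m) / ∏_{j<m} (1 - q^{j+1})`.
-/

section ZPow

variable {K : Type*} [Field K] {t : K}

theorem one_sub_zpow_neg (ht : t ≠ 0) (e : ℤ) : 1 - t ^ (-e) = -t ^ (-e) * (1 - t ^ e) := by
  rw [mul_one_sub, neg_mul, ← zpow_add₀ ht, neg_add_cancel, zpow_zero]
  ring

theorem prod_one_sub_zpow_reflect (ht : t ≠ 0) (m : ℕ) (n : ℤ) :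
    ∏ i ∈ range m, (1 - t ^ (2 * ((m : ℤ) - n - i))) =
      (-1) ^ m * t ^ ((m : ℤ) * (m + 1) - 2 * m * n) *
        ∏ i ∈ range m, (1 - t ^ (2 * (n - 1 - i))) := by
  induction m generalizing n with
  | zero => simp
  | succ m ih =>
    have hlast : 1 - t ^ (2 * ((m + 1 : ℕ) - n - m : ℤ)) =
        -t ^ (2 * (1 - n)) * (1 - t ^ (2 * (n - 1))) := by
      rw [show 2 * ((m + 1 : ℕ) - n - m : ℤ) = -(2 * (n - 1)) by push_cast; ring,
        show 2 * (1 - n) = -(2 * (n - 1)) by ring]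
      exact one_sub_zpow_neg ht _
    have hexp : t ^ (((m + 1 : ℕ) : ℤ) * ((m + 1 : ℕ) + 1) - 2 * (m + 1 : ℕ) * n) =
        t ^ ((m : ℤ) * (m + 1) - 2 * m * (n - 1)) * t ^ (2 * (1 - n)) := by
      rw [← zpow_add₀ ht]
      congr 1
      push_cast
      ring
    rw [prod_range_succ, prod_range_succ' _ m, hlast, hexp]
    have hshift : ∀ i ∈ range m,
        1 - t ^ (2 * (((m + 1 : ℕ) : ℤ) - n - i)) = 1 - t ^ (2 * ((m : ℤ) - (n - 1) - i)) := by
      intro i _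
      push_cast
      ring_nf
    rw [prod_congr rfl hshift, ih]
    have hshift' : ∀ i ∈ range m,
        1 - t ^ (2 * (n - 1 - 1 - i)) = 1 - t ^ (2 * (n - 1 - ((i + 1 : ℕ) : ℤ))) := by
      intro i _
      push_cast
      ring_nf
    rw [prod_congr rfl hshift', pow_succ, Nat.cast_zero, sub_zero]
    ring

end ZPow

namespace Polynomial

section RogersSzego

variable {R : Type*} [CommRing R]

def rogersSzego (t : R) : ℕ → R[X]
  | 0 => 1
  | n + 1 => X * rogersSzego t n - C ((-1) ^ n * t ^ (n + 1)) * reflect n (rogersSzego t n)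

theorem rogersSzego_zero (t : R) : rogersSzego t 0 = 1 :=
  rfl

theorem rogersSzego_succ (t : R) (n : ℕ) :
    rogersSzego t (n + 1) =
      X * rogersSzego t n - C ((-1) ^ n * t ^ (n + 1)) * reflect n (rogersSzego t n) :=
  rfl

theorem map_rogersSzego {S : Type*} [CommRing S] (f : R →+* S) (t : R) (n : ℕ) :
    (rogersSzego t n).map f = rogersSzego (f t) n := by
  induction n with
  | zero => simp [rogersSzego_zero]
  | succ n ih => simp [rogersSzego_succ, ← reflect_map, ih]

theorem natDegree_rogersSzego_le (t : R) (n : ℕ) : (rogersSzego t n).natDegree ≤ n := by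
  induction n with
  | zero => simp [rogersSzego_zero]
  | succ n ih =>
    rw [rogersSzego_succ]
    refine (natDegree_sub_le _ _).trans (max_le ?_ ?_)
    · exact (natDegree_mul_le_of_le natDegree_X_le ih).trans_eq (add_comm 1 n)
    · exact (natDegree_C_mul_le _ _).trans (natDegree_reflect_le.trans (by omega))

theorem coeff_rogersSzego_self (t : R) (n : ℕ) : (rogersSzego t n).coeff n = 1 := by
  induction n with
  | zero => simp [rogersSzego_zero]
  | succ n ih =>
    have hlow : (C ((-1) ^ n * t ^ (n + 1)) * reflect n (rogersSzego t n)).coeff (n + 1) = 0 :=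
      coeff_eq_zero_of_natDegree_lt <|
        (natDegree_C_mul_le _ _).trans_lt (natDegree_reflect_le.trans_lt
          (max_lt (by omega) ((natDegree_rogersSzego_le t n).trans_lt (by omega))))
    rw [rogersSzego_succ, coeff_sub, coeff_X_mul, ih, hlow, sub_zero]

end RogersSzego

section ThetaMoment

variable {K : Type*} [Field K] {t : K}

/-- `p ↦ L(p(z) z^{-n})` for the functional `L` with moments `L(z^j) = t^{j²}`. -/
def thetaMoment (t : K) (n : ℤ) : K[X] →ₗ[K] K :=
  lsum fun k => LinearMap.mulRight K (t ^ (((k : ℤ) - n) ^ 2))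

theorem thetaMoment_apply (t : K) (n : ℤ) (p : K[X]) :
    thetaMoment t n p = p.sum fun k c => c * t ^ (((k : ℤ) - n) ^ 2) :=
  rfl

theorem thetaMoment_monomial (t : K) (n : ℤ) (k : ℕ) (c : K) :
    thetaMoment t n (monomial k c) = c * t ^ (((k : ℤ) - n) ^ 2) := by
  rw [thetaMoment_apply, sum_monomial_index]
  exact zero_mul _

theorem thetaMoment_eq_sum_range (t : K) (n : ℤ) {p : K[X]} {N : ℕ} (hp : p.natDegree < N) :
    thetaMoment t n p = ∑ k ∈ range N, p.coeff k * t ^ (((k : ℤ) - n) ^ 2) :=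
  sum_over_range' _ (fun _ => zero_mul _) N hp

theorem thetaMoment_C_mul (t : K) (n : ℤ) (a : K) (p : K[X]) :
    thetaMoment t n (C a * p) = a * thetaMoment t n p := by
  rw [← smul_eq_C_mul, map_smul, smul_eq_mul]

theorem thetaMoment_X_mul (t : K) (n : ℤ) (p : K[X]) :
    thetaMoment t n (X * p) = thetaMoment t (n - 1) p := by
  induction p using Polynomial.induction_on' with
  | add p q hp hq => rw [mul_add, map_add, map_add, hp, hq]
  | monomial k c =>
    rw [X_mul_monomial, thetaMoment_monomial, thetaMoment_monomial]
    congr 2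
    push_cast
    ring

theorem thetaMoment_reflect (t : K) (n : ℤ) {m : ℕ} {p : K[X]} (hp : p.natDegree ≤ m) :
    thetaMoment t n (reflect m p) = thetaMoment t (m - n) p := by
  have hdeg : (reflect m p).natDegree < m + 1 :=
    Nat.lt_succ_of_le (natDegree_reflect_le.trans (max_le le_rfl hp))
  rw [thetaMoment_eq_sum_range t n hdeg, thetaMoment_eq_sum_range t _ (Nat.lt_succ_of_le hp),
    ← sum_range_reflect]
  refine sum_congr rfl fun k hk => ?_
  have hk : k ≤ m := Nat.lt_succ_iff.mp (mem_range.mp hk)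
  rw [show m + 1 - 1 - k = m - k by omega, coeff_reflect, revAt_le (by omega),
    Nat.sub_sub_self hk]
  congr 2
  push_cast [hk]
  ring

theorem thetaMoment_rogersSzego (ht : t ≠ 0) (m : ℕ) (n : ℤ) :
    thetaMoment t n (rogersSzego t m) =
      t ^ ((n - m) ^ 2) * ∏ i ∈ range m, (1 - t ^ (2 * (n - i))) := by
  induction m generalizing n with
  | zero =>
    rw [rogersSzego_zero, ← monomial_zero_one, thetaMoment_monomial]
    simp only [Nat.cast_zero, zero_sub, sub_zero, neg_sq, one_mul, range_zero, prod_empty, mul_one]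
  | succ m ih =>
    rw [rogersSzego_succ, map_sub, thetaMoment_C_mul, thetaMoment_X_mul,
      thetaMoment_reflect _ _ (natDegree_rogersSzego_le t m), ih, ih, prod_one_sub_zpow_reflect ht,
      prod_range_succ', Nat.cast_zero, sub_zero]
    set Q := ∏ i ∈ range m, (1 - t ^ (2 * (n - 1 - i)))
    have hQ : ∏ i ∈ range m, (1 - t ^ (2 * (n - ((i + 1 : ℕ) : ℤ)))) = Q := by
      refine prod_congr rfl fun i _ => ?_
      push_cast
      ring_nf
    have hsign : ((-1 : K) ^ m) ^ 2 = 1 := by rw [← pow_mul, mul_comm, pow_mul, neg_one_sq, one_pow]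
    have hexp : t ^ (m + 1) * t ^ (((m : ℤ) - n - m) ^ 2) * t ^ ((m : ℤ) * (m + 1) - 2 * m * n) =
        t ^ ((n - 1 - m) ^ 2) * t ^ (2 * n) := by
      rw [← zpow_natCast, ← zpow_add₀ ht, ← zpow_add₀ ht, ← zpow_add₀ ht]
      congr 1
      push_cast
      ring
    rw [hQ, show n - ((m + 1 : ℕ) : ℤ) = n - 1 - m by push_cast; ring]
    linear_combination -(t ^ (m + 1) * t ^ (((m : ℤ) - n - m) ^ 2) *
      t ^ ((m : ℤ) * (m + 1) - 2 * m * n) * Q) * hsign - Q * hexp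

theorem thetaMoment_zero_rogersSzego (ht : t ≠ 0) {m : ℕ} (hm : m ≠ 0) :
    thetaMoment t 0 (rogersSzego t m) = 0 := by
  rw [thetaMoment_rogersSzego ht, prod_eq_zero (mem_range.mpr (Nat.pos_of_ne_zero hm)), mul_zero]
  simp

end ThetaMoment

theorem lhom_ext_of_coeff_self_eq_one {R M : Type*} [CommRing R] [AddCommGroup M] [Module R M]
    {P : ℕ → R[X]} (hdeg : ∀ n, (P n).natDegree ≤ n) (hcoeff : ∀ n, (P n).coeff n = 1)
    {f g : R[X] →ₗ[R] M} (h : ∀ n, f (P n) = g (P n)) : f = g := by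
  have hsplit : ∀ (φ : R[X] →ₗ[R] M) (n : ℕ), φ (P n) =
      ∑ i ∈ range n, (P n).coeff i • φ (monomial i 1) + φ (monomial n 1) := by
    intro φ n
    conv_lhs => rw [(P n).as_sum_range' (n + 1) (Nat.lt_succ_of_le (hdeg n))]
    simp only [sum_range_succ, hcoeff, map_add, map_sum, ← map_smul, smul_eq_mul, mul_one]
  refine lhom_ext' fun n => LinearMap.ext_ring ?_
  induction n using Nat.strong_induction_on with
  | _ n ih =>
    simp only [LinearMap.comp_apply] at ih ⊢
    have hn := h n
    rw [hsplit, hsplit, sum_congr rfl fun i hi => by rw [ih i (mem_range.mp hi)]] at hn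
    exact add_left_cancel hn

end Polynomial

theorem laurentBarInv_T (n : ℤ) : laurentBarInv (T n) = T (-n) := by
  rw [laurentBarInv, T, AddMonoidAlgebra.coeff_single, Finsupp.sum_single_index (by simp),
    map_one, map_one, one_mul]

theorem polyBarInv_eq_invert (p : ℂ[X]) :
    polyBarInv p = invert (toLaurent (p.map (starRingEnd ℂ))) := by
  rw [Polynomial.map, eval₂_eq_sum, polyBarInv, Polynomial.sum, Polynomial.sum, map_sum, map_sum]
  refine sum_congr rfl fun k _ => ?_
  simp

namespace LaurentPolynomial

variable {K : Type*} [Field K] {t : K} (L : K[T;T⁻¹] →ₗ[K] K)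

theorem apply_T_natCast_of_rogersSzego (ht : t ≠ 0) (h1 : L 1 = 1)
    (horth : ∀ k, 1 ≤ k → L (toLaurent (rogersSzego t k)) = 0) (k : ℕ) :
    L (T k) = t ^ ((k : ℤ) ^ 2) := by
  have hL : L.comp toLaurentAlg.toLinearMap = thetaMoment t 0 := by
    refine lhom_ext_of_coeff_self_eq_one (natDegree_rogersSzego_le t)
      (coeff_rogersSzego_self t) fun n => ?_
    rcases Nat.eq_zero_or_pos n with rfl | hn
    · rw [rogersSzego_zero, LinearMap.comp_apply, AlgHom.toLinearMap_apply, map_one, h1,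
        ← monomial_zero_one, thetaMoment_monomial]
      simp
    · simp [horth n hn, thetaMoment_zero_rogersSzego ht hn.ne']
  have hk := LinearMap.congr_fun hL (monomial k 1)
  rwa [LinearMap.comp_apply, AlgHom.toLinearMap_apply, toLaurentAlg_apply, toLaurent_C_mul_T,
    map_one, one_mul, thetaMoment_monomial, one_mul, sub_zero] at hk

theorem apply_toLaurent_mul_T_neg (hL : ∀ j, L (T j) = t ^ (j ^ 2)) (p : K[X]) (n : ℤ) :
    L (toLaurent p * T (-n)) = thetaMoment t n p := by
  induction p using Polynomial.induction_on' with
  | add p q hp hq => rw [map_add, add_mul, map_add, map_add, hp, hq]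
  | monomial k c =>
    rw [toLaurent_C_mul_T, thetaMoment_monomial, mul_assoc, ← T_add, ← smul_eq_C_mul, map_smul, hL,
      smul_eq_mul, sub_eq_add_neg]

end LaurentPolynomial

theorem apply_T_of_rogersSzego {t : ℂ} (ht : t ≠ 0) (hconj : starRingEnd ℂ t = t)
    (L : ℂ[T;T⁻¹] →ₗ[ℂ] ℂ) (h1 : L 1 = 1)
    (horth : ∀ k, 1 ≤ k → L (toLaurent (rogersSzego t k)) = 0)
    (horth' : ∀ k, 1 ≤ k → L (polyBarInv (rogersSzego t k)) = 0) (j : ℤ) :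
    L (T j) = t ^ (j ^ 2) := by
  obtain ⟨k, rfl | rfl⟩ := Int.eq_nat_or_neg j
  · exact apply_T_natCast_of_rogersSzego L ht h1 horth k
  · have hinv : ∀ k, L (polyBarInv (rogersSzego t k)) = L (invert (toLaurent (rogersSzego t k))) :=
      fun k => by rw [polyBarInv_eq_invert, map_rogersSzego, hconj]
    simpa using apply_T_natCast_of_rogersSzego (L.comp invert.toLinearMap) ht (by simpa using h1)
      (fun k hk => by simpa [← hinv] using horth' k hk) k

theorem szego_eq_rogersSzego {t : ℂ} (hconj : starRingEnd ℂ t = t) {α : ℕ → ℂ}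
    (hα : ∀ n, α n = (-1) ^ n * t ^ (n + 1)) (n : ℕ) : szego α n = rogersSzego t n := by
  induction n with
  | zero => rfl
  | succ n ih => simp [szego, rogersSzego_succ, ih, map_rogersSzego, hconj, hα]

theorem genMom_zero_eq (L : ℂ[T;T⁻¹] →ₗ[ℂ] ℂ) (α : ℕ → ℂ) (n : ℤ) (m : ℕ) :
    genMom L α n 0 m = L (toLaurent (szego α m) * T (-n)) /
      ∏ j ∈ range m, ((1 - Complex.normSq (α j) : ℝ) : ℂ) := by
  rw [genMom, szego, map_one, mul_one, laurentBarInv_T]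

theorem genMom_zero_of_rogersSzego {s : ℝ} (hs : s ≠ 0) {α : ℕ → ℂ}
    (hα : ∀ n, α n = ((-1 : ℝ) ^ n * s ^ (n + 1) : ℝ)) (L : ℂ[T;T⁻¹] →ₗ[ℂ] ℂ) (h1 : L 1 = 1)
    (horth : ∀ k, 1 ≤ k → L (toLaurent (szego α k)) = 0)
    (horth' : ∀ k, 1 ≤ k → L (polyBarInv (szego α k)) = 0) (n : ℤ) (m : ℕ) :
    genMom L α n 0 m =
      ((s ^ ((n - m) ^ 2) * (∏ i ∈ range m, (1 - s ^ (2 * (n - i)))) /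
        ∏ j ∈ range m, (1 - s ^ (2 * (j + 1))) : ℝ) : ℂ) := by
  have ht : (s : ℂ) ≠ 0 := Complex.ofReal_ne_zero.mpr hs
  have hszego := szego_eq_rogersSzego (α := α) (Complex.conj_ofReal s)
    fun n => by rw [hα]; push_cast; rfl
  have hmom := apply_T_of_rogersSzego ht (Complex.conj_ofReal s) L h1
    (fun k hk => hszego k ▸ horth k hk) (fun k hk => hszego k ▸ horth' k hk)
  have hnormSq : ∀ j, Complex.normSq (α j) = s ^ (2 * (j + 1)) := fun j => by
    rw [hα, Complex.normSq_ofReal, ← sq, mul_pow, ← pow_mul, ← pow_mul, mul_comm j, pow_mul,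
      neg_one_sq, one_pow, one_mul, mul_comm]
  rw [genMom_zero_eq, hszego, apply_toLaurent_mul_T_neg L hmom, thetaMoment_rogersSzego ht]
  simp only [hnormSq]
  push_cast
  rfl

theorem rogers_szego_general (q : ℝ) (hq0 : 0 < q) (α : ℕ → ℂ)
    (hαdef : α = fun n : ℕ => (((-1 : ℝ) ^ n * q ^ (((n : ℝ) + 1) / 2) : ℝ) : ℂ))
    (L : LaurentPolynomial ℂ →ₗ[ℂ] ℂ) (hL1 : L 1 = 1)
    (hLphi : ∀ k : ℕ, 1 ≤ k → L (Polynomial.toLaurent (szego α k)) = 0)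
    (hLbar : ∀ k : ℕ, 1 ≤ k → L (polyBarInv (szego α k)) = 0) :
    ∀ n m : ℕ,
      (m ≤ n → genMom L α n 0 m =
        ((((∏ i ∈ Finset.range m, (1 - q ^ (n - i))) /
            (∏ i ∈ Finset.range m, (1 - q ^ (i + 1)))) *
          q ^ ((((n : ℝ) - (m : ℝ)) ^ 2) / 2) : ℝ) : ℂ)) ∧
      (n < m → genMom L α n 0 m = 0) := by
  have hα : ∀ n, α n = ((-1 : ℝ) ^ n * √q ^ (n + 1) : ℝ) := fun n => by
    rw [hαdef]
    dsimp only
    rw [Real.rpow_div_two_eq_sqrt _ hq0.le, ← Nat.cast_add_one, Real.rpow_natCast]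
  have hsq : √q ^ 2 = q := Real.sq_sqrt hq0.le
  intro n m
  rw [genMom_zero_of_rogersSzego (Real.sqrt_pos.mpr hq0).ne' hα L hL1 hLphi hLbar]
  refine ⟨fun hmn => ?_, fun hnm => ?_⟩
  · have hnum : ∀ i ∈ range m, 1 - √q ^ (2 * ((n : ℤ) - i)) = 1 - q ^ (n - i) := fun i hi => by
      rw [show 2 * ((n : ℤ) - i) = ((2 * (n - i) : ℕ) : ℤ) by
        have := (mem_range.mp hi).le.trans hmn; omega, zpow_natCast, pow_mul, hsq]
    have hpow : √q ^ (((n : ℤ) - m) ^ 2) = q ^ ((((n : ℝ) - m) ^ 2) / 2) := by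
      rw [Real.rpow_div_two_eq_sqrt _ hq0.le, ← Real.rpow_intCast]
      push_cast
      rfl
    rw [prod_congr rfl hnum, hpow]
    simp only [pow_mul, hsq]
    rw [mul_comm (q ^ _), mul_div_right_comm]
  · rw [prod_eq_zero (mem_range.mpr hnm) (by simp), mul_zero, zero_div, Complex.ofReal_zero]

/-- Rogers–Szegő polynomials: with `α_n = (-1)ⁿ q^{(n+1)/2}`,
`q ∈ (0,1)`, the moments are `μ_{n,m} = [n choose m]_q · q^{(n-m)²/2}` for `n ≥ m`
and `0` for `n < m`. -/
theorem rogers_szego (q : ℝ) (hq0 : 0 < q) (hq1 : q < 1) (α : ℕ → ℂ)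
    (hαdef : α = fun n : ℕ => (((-1 : ℝ) ^ n * q ^ (((n : ℝ) + 1) / 2) : ℝ) : ℂ))
    (L : LaurentPolynomial ℂ →ₗ[ℂ] ℂ) (hL1 : L 1 = 1)
    (hLphi : ∀ k : ℕ, 1 ≤ k → L (Polynomial.toLaurent (szego α k)) = 0)
    (hLbar : ∀ k : ℕ, 1 ≤ k → L (polyBarInv (szego α k)) = 0) :
    ∀ n m : ℕ,
      (m ≤ n → genMom L α n 0 m =
        ((((∏ i ∈ Finset.range m, (1 - q ^ (n - i))) /
            (∏ i ∈ Finset.range m, (1 - q ^ (i + 1)))) *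
          q ^ ((((n : ℝ) - (m : ℝ)) ^ 2) / 2) : ℝ) : ℂ)) ∧
      (n < m → genMom L α n 0 m = 0) :=
  rogers_szego_general q hq0 α hαdef L hL1 hLphi hLbar
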